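/- arXiv:2005.04388 — 2 statements merged into one kernel-verified Lean document; each statement's English description precedes it below -/
import Mathlib

section
/- If a is an accumulation point of A (for every n, Z_n(a) ∩ (A \ mon(a)) ≠ ∅) and the equivalence is not totally disconnected at a in the sense that for every n there exists m > n with Z_m(a) strictly contained in Z_n(a) modulo monads, then there exists a sequence (a_i) of elements of A \ mon(a), lying in pairwise distinct monads, converging to a (i.e., ∀ k ∃ i ∀ j > i, R_k a_j a). -/
/-!
Choose for each `n` a point `p n ∈ A ∩ Z_n(a)` outside `mon(a)` and a level `K n` with
`¬ R (K n) (p n) a`. Any `w ∈ Z_{K n + 1}(a)` satisfies `¬ R (K n + 1) (p n) w`, since otherwise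
chaining through `w` would give `R (K n) (p n) a`. So along levels `n₀ < n₁ < ⋯` with
`K nᵢ < nⱼ` for `i < j`, the points `p nᵢ` lie in pairwise distinct monads, and they converge
to `a` because `p nᵢ ∈ Z_{nᵢ}(a)` with `nᵢ ≥ i`.
-/

theorem exists_strictMono_lt_of_lt (f : ℕ → ℕ) :
    ∃ φ : ℕ → ℕ, StrictMono φ ∧ ∀ i j, i < j → f (φ i) < φ j := by
  let φ : ℕ → ℕ := fun i => Nat.rec 0 (fun _ n => max n (f n) + 1) i
  have hsucc : ∀ i, φ (i + 1) = max (φ i) (f (φ i)) + 1 := fun _ => rfl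
  have hφ : StrictMono φ := strictMono_nat_of_lt_succ fun i => by rw [hsucc]; omega
  refine ⟨φ, hφ, fun i j hij => ?_⟩
  calc f (φ i) < φ (i + 1) := by rw [hsucc]; omega
    _ ≤ φ j := hφ.monotone hij

section

variable {C : Type*} {R : ℕ → C → C → Prop}

theorem rel_of_le (hdec : ∀ n x y, R (n + 1) x y → R n x y) {m n : ℕ} {x y : C}
    (hmn : m ≤ n) (h : R n x y) : R m x y :=
  antitone_nat_of_succ_le (f := R) (fun n => hdec n) hmn x y h

theorem not_rel_succ_of_not_rel (hsymm : ∀ n x y, R n x y → R n y x)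
    (hchain : ∀ n x y z, R (n + 1) x y → R (n + 1) y z → R n x z) {k : ℕ} {a z w : C}
    (hz : ¬ R k z a) (hw : R (k + 1) a w) : ¬ R (k + 1) z w :=
  fun hzw => hz (hchain k z w a hzw (hsymm _ _ _ hw))

theorem not_forall_rel_of_not_rel (hsymm : ∀ n x y, R n x y → R n y x)
    (hdec : ∀ n x y, R (n + 1) x y → R n x y)
    (hchain : ∀ n x y z, R (n + 1) x y → R (n + 1) y z → R n x z) {k n : ℕ} {a z w : C}
    (hz : ¬ R k z a) (hkn : k < n) (hw : R n a w) : ¬ ∀ m, R m z w :=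
  fun h => not_rel_succ_of_not_rel hsymm hchain hz (rel_of_le hdec hkn hw) (h _)

end

theorem stmt9_general {C : Type*} (R : ℕ → C → C → Prop)
    (hsymm : ∀ n x y, R n x y → R n y x)
    (hdec : ∀ n x y, R (n + 1) x y → R n x y)
    (hchain : ∀ n x y z, R (n + 1) x y → R (n + 1) y z → R n x z)
    (A : Set C) (a : C)
    (hacc : ∀ n, ∃ z ∈ A, R n a z ∧ ¬ (∀ m, R m z a)) :
    ∃ s : ℕ → C,
      (∀ i, s i ∈ A ∧ ¬ (∀ m, R m (s i) a)) ∧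
      (∀ i j, i ≠ j → ¬ (∀ m, R m (s i) (s j))) ∧
      (∀ k, ∃ i, ∀ j > i, R k (s j) a) := by
  choose p hpA hpa hpmon using hacc
  choose K hK using fun n => not_forall.mp (hpmon n)
  obtain ⟨φ, hφ, hKφ⟩ := exists_strictMono_lt_of_lt K
  have far : ∀ i j, i < j → ¬ ∀ m, R m (p (φ i)) (p (φ j)) := fun i j hij =>
    not_forall_rel_of_not_rel hsymm hdec hchain (hK _) (hKφ i j hij) (hpa _)
  refine ⟨p ∘ φ, fun i => ⟨hpA _, hpmon _⟩, fun i j hij => ?_, fun k => ⟨k, fun j hj => ?_⟩⟩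
  · rcases hij.lt_or_gt with h | h
    · exact far i j h
    · exact fun hall => far j i h fun m => hsymm _ _ _ (hall m)
  · exact hsymm _ _ _ (rel_of_le hdec (hj.le.trans (hφ.id_le j)) (hpa _))

theorem stmt9 {C : Type*} (R : ℕ → C → C → Prop)
    (hrefl : ∀ n x, R n x x) (hsymm : ∀ n x y, R n x y → R n y x)
    (hdec : ∀ n x y, R (n + 1) x y → R n x y)
    (hchain : ∀ n x y z, R (n + 1) x y → R (n + 1) y z → R n x z)
    (A : Set C) (a : C)
    (hacc : ∀ n, ∃ z ∈ A, R n a z ∧ ¬ (∀ m, R m z a))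
    (hntd : ∀ n, ∃ m > n, {z | R m a z} ⊆ {z | R n a z} ∧
      ∃ z, R n a z ∧ ¬ R m a z ∧ ¬ (∀ k, R k z a)) :
    ∃ s : ℕ → C,
      (∀ i, s i ∈ A ∧ ¬ (∀ m, R m (s i) a)) ∧
      (∀ i j, i ≠ j → ¬ (∀ m, R m (s i) (s j))) ∧
      (∀ k, ∃ i, ∀ j > i, R k (s j) a) :=
  stmt9_general R hsymm hdec hchain A a hacc
end

section
/- If the equivalence ≐ on C is compact in the sense that every relation R_n of its generating sequence admits only finite R_n-nets (sets with no two distinct R_n-related elements are finite), then every sequence (a_i)_{i∈ℕ} in C has a subsequence (a_{F(j)}) with F strictly increasing such that all terms a_{F(j)} are pairwise R_n-related for each fixed n up to the index, i.e., the subsequence is ≐-Cauchy: ∀ n ∃ N ∀ j,k ≥ N, R_n a_{F(j)} a_{F(k)}. -/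
/-!
Fix a nonprincipal ultrafilter `U` on `ℕ`. Finiteness of `R`-nets makes every ultrafilter on `C`
concentrate `R`-near a single point: otherwise one could pick, one after another, infinitely many
pairwise unrelated points. Applied to the image of `U` under `a`, this gives points `x n` with
`R (n + 1) (a i) (x n)` for `U`-almost every `i`. A diagonal extraction then yields `G` with
`a (G j)` being `R (n + 1)`-close to `x n` for all `j ≥ n`, and two such terms are `R n`-related.
-/

open Filter

theorem Ultrafilter.exists_eventually_rel_of_finite_nets {C : Type*} {R : C → C → Prop}
    (hrefl : ∀ x, R x x) (hsymm : ∀ x y, R x y → R y x)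
    (hnets : ∀ X : Set C, X.Pairwise (fun x y => ¬ R x y) → X.Finite) (V : Ultrafilter C) :
    ∃ x, ∀ᶠ y in V, R y x := by
  by_contra! hfar
  have : Std.Symm fun x y => ¬ R x y := ⟨fun x y hxy hyx => hxy (hsymm y x hyx)⟩
  have hextend : ∀ s : Finset C, ∃ y, ∀ x ∈ s, ¬ R x y := fun s =>
    ((eventually_all_finset s).2 fun x _ =>
      (hfar x).mono fun _ hyx hxy => hyx (hsymm x _ hxy)).exists
  obtain ⟨f, -, hf⟩ := exists_seq_of_forall_finset_exists' (fun _ => True) (fun x y => ¬ R x y)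
    fun s _ => (hextend s).imp fun _ hy => ⟨trivial, hy⟩
  have hinj : f.Injective := fun m n hmn => by_contra fun hne => hf hne (hmn ▸ hrefl (f m))
  refine Set.infinite_range_of_injective hinj (hnets _ ?_)
  rintro _ ⟨m, rfl⟩ _ ⟨n, rfl⟩ hne
  exact hf fun hmn => hne (congrArg f hmn)

theorem exists_strictMono_forall_le_of_eventually {P : ℕ → ℕ → Prop} {l : Filter ℕ} [l.NeBot]
    (hl : l ≤ atTop) (h : ∀ n, ∀ᶠ i in l, P n i) :
    ∃ G : ℕ → ℕ, StrictMono G ∧ ∀ j, ∀ n ≤ j, P n (G j) :=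
  extraction_forall_of_frequently fun j =>
    ((eventually_all_finite (Set.finite_Iic j)).2 fun n _ => h n).frequently.filter_mono hl

theorem stmt18_general {C : Type*} (R : ℕ → C → C → Prop)
    (hrefl : ∀ n x, R n x x) (hsymm : ∀ n x y, R n x y → R n y x)
    (hchain : ∀ n x y z, R (n + 1) x y → R (n + 1) y z → R n x z)
    (hcompact : ∀ n, ∀ X : Set C, (∀ x ∈ X, ∀ y ∈ X, x ≠ y → ¬ R n x y) → X.Finite)
    (a : ℕ → C) :
    ∃ G : ℕ → ℕ, StrictMono G ∧
      ∀ n, ∃ N, ∀ j ≥ N, ∀ k ≥ N, R n (a (G j)) (a (G k)) := by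
  let U := hyperfilter ℕ
  choose x hx using fun n => (U.map a).exists_eventually_rel_of_finite_nets (hrefl (n + 1))
    (hsymm (n + 1)) (hcompact (n + 1))
  have hU : (U : Filter ℕ) ≤ atTop := Nat.cofinite_eq_atTop ▸ hyperfilter_le_cofinite
  obtain ⟨G, hG, hGx⟩ := exists_strictMono_forall_le_of_eventually hU hx
  exact ⟨G, hG, fun n => ⟨n, fun j hj k hk =>
    hchain n _ _ _ (hGx j n hj) (hsymm _ _ _ (hGx k n hk))⟩⟩

theorem stmt18 {C : Type*} (R : ℕ → C → C → Prop)
    (hrefl : ∀ n x, R n x x) (hsymm : ∀ n x y, R n x y → R n y x)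
    (hdec : ∀ n x y, R (n + 1) x y → R n x y)
    (hchain : ∀ n x y z, R (n + 1) x y → R (n + 1) y z → R n x z)
    (hcompact : ∀ n, ∀ X : Set C, (∀ x ∈ X, ∀ y ∈ X, x ≠ y → ¬ R n x y) → X.Finite)
    (a : ℕ → C) :
    ∃ G : ℕ → ℕ, StrictMono G ∧
      ∀ n, ∃ N, ∀ j ≥ N, ∀ k ≥ N, R n (a (G j)) (a (G k)) :=
  stmt18_general R hrefl hsymm hchain hcompact a
end
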